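/- arXiv:q-alg/9712023 — 3 statements merged into one kernel-verified Lean document; each statement's English description precedes it below -/
import Mathlib

section
/- Let A(B)^C be a C-Galois extension with canonical entwining map ψ, and suppose there exists a linear map φ : C → A with 1₍₀₎φ(1₍₁₎) = 1 and ψ(c₍₁₎ ⊗ φ(c₍₂₎)) = φ(c)1₍₀₎ ⊗ 1₍₁₎ for all c ∈ C. If for all b ∈ B and c ∈ C one has b_α φ(c^α) = φ(c) b (where ψ(c⊗b) = b_α ⊗ c^α), then A is faithfully flat as a left B-module. -/
open TensorProduct LinearMap

/-- An entwining structure `(A, C)_ψ`. -/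
structure Entwining (k A C : Type) [Field k] [Ring A] [Algebra k A]
    [AddCommGroup C] [Module k C] [Coalgebra k C] where
  ψ : C ⊗[k] A →ₗ[k] A ⊗[k] C
  entw_mul : ψ ∘ₗ (mul' k A).lTensor C =
    (mul' k A).rTensor C ∘ₗ (TensorProduct.assoc k A A C).symm.toLinearMap ∘ₗ
      ψ.lTensor A ∘ₗ (TensorProduct.assoc k A C A).toLinearMap ∘ₗ
      ψ.rTensor A ∘ₗ (TensorProduct.assoc k C A A).symm.toLinearMap
  entw_unit : ∀ c : C, ψ (c ⊗ₜ[k] 1) = 1 ⊗ₜ[k] c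
  entw_comul : (Coalgebra.comul (R := k) (A := C)).lTensor A ∘ₗ ψ =
    (TensorProduct.assoc k A C C).toLinearMap ∘ₗ ψ.rTensor C ∘ₗ
      (TensorProduct.assoc k C A C).symm.toLinearMap ∘ₗ ψ.lTensor C ∘ₗ
      (TensorProduct.assoc k C C A).toLinearMap ∘ₗ
      (Coalgebra.comul (R := k) (A := C)).rTensor A
  entw_counit : (TensorProduct.rid k A).toLinearMap ∘ₗ
      (Coalgebra.counit (R := k) (A := C)).lTensor A ∘ₗ ψ =
    (TensorProduct.lid k A).toLinearMap ∘ₗ (Coalgebra.counit (R := k) (A := C)).rTensor A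

/-- A right `C`-comodule structure on `V`. -/
structure RComod (k C V : Type) [Field k] [AddCommGroup C] [Module k C] [Coalgebra k C]
    [AddCommGroup V] [Module k V] where
  ρ : V →ₗ[k] V ⊗[k] C
  coassoc : (Coalgebra.comul (R := k) (A := C)).lTensor V ∘ₗ ρ =
    (TensorProduct.assoc k V C C).toLinearMap ∘ₗ ρ.rTensor C ∘ₗ ρ
  counit_id : (TensorProduct.rid k V).toLinearMap ∘ₗ
      (Coalgebra.counit (R := k) (A := C)).lTensor V ∘ₗ ρ = LinearMap.id

/-- A left `C`-comodule structure on `V`. -/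
structure LComod (k C V : Type) [Field k] [AddCommGroup C] [Module k C] [Coalgebra k C]
    [AddCommGroup V] [Module k V] where
  ρ : V →ₗ[k] C ⊗[k] V
  coassoc : (Coalgebra.comul (R := k) (A := C)).rTensor V ∘ₗ ρ =
    (TensorProduct.assoc k C C V).symm.toLinearMap ∘ₗ ρ.lTensor C ∘ₗ ρ
  counit_id : (TensorProduct.lid k V).toLinearMap ∘ₗ
      (Coalgebra.counit (R := k) (A := C)).rTensor V ∘ₗ ρ = LinearMap.id

/-- A right `A`-module structure (`k`-linear) on `M`. -/
structure RAct (k A M : Type) [Field k] [Ring A] [Algebra k A]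
    [AddCommGroup M] [Module k M] where
  act : M ⊗[k] A →ₗ[k] M
  act_one : ∀ m : M, act (m ⊗ₜ[k] 1) = m
  act_mul : ∀ (m : M) (a b : A),
    act (act (m ⊗ₜ[k] a) ⊗ₜ[k] b) = act (m ⊗ₜ[k] (a * b))

variable {k A C M : Type} [Field k] [Ring A] [Algebra k A]
  [AddCommGroup C] [Module k C] [Coalgebra k C] [AddCommGroup M] [Module k M]

/-- The compatibility condition making `M` an entwined `(A,C)_ψ`-module. -/
def EntwCompat (E : Entwining k A C) (α : RAct k A M) (ρM : RComod k C M) : Prop :=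
  ρM.ρ ∘ₗ α.act = α.act.rTensor C ∘ₗ (TensorProduct.assoc k M A C).symm.toLinearMap ∘ₗ
    E.ψ.lTensor M ∘ₗ (TensorProduct.assoc k M C A).toLinearMap ∘ₗ ρM.ρ.rTensor A

/-- The `A`-action on `M ⊗ C` induced by an entwining: `(m⊗c)·a = m·a_α ⊗ c^α`. -/
noncomputable def entwAct (E : Entwining k A C) (ν : M ⊗[k] A →ₗ[k] M) :
    (M ⊗[k] C) ⊗[k] A →ₗ[k] M ⊗[k] C :=
  ν.rTensor C ∘ₗ (TensorProduct.assoc k M A C).symm.toLinearMap ∘ₗ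
    E.ψ.lTensor M ∘ₗ (TensorProduct.assoc k M C A).toLinearMap

/-- The `C`-coaction `M ⊗ Δ` on `M ⊗ C`. -/
noncomputable def coactMC (k C M : Type) [Field k] [AddCommGroup C] [Module k C]
    [Coalgebra k C] [AddCommGroup M] [Module k M] :
    M ⊗[k] C →ₗ[k] (M ⊗[k] C) ⊗[k] C :=
  (TensorProduct.assoc k M C C).symm.toLinearMap ∘ₗ
    (Coalgebra.comul (R := k) (A := C)).lTensor M

/-- The coaction on `V ⊗ A` induced by an entwining: `v⊗a ↦ v₍₀₎ ⊗ ψ(v₍₁₎⊗a)`. -/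
noncomputable def entwCoact {V : Type} [AddCommGroup V] [Module k V]
    (E : Entwining k A C) (ρV : V →ₗ[k] V ⊗[k] C) :
    V ⊗[k] A →ₗ[k] (V ⊗[k] A) ⊗[k] C :=
  (TensorProduct.assoc k V A C).symm.toLinearMap ∘ₗ E.ψ.lTensor V ∘ₗ
    (TensorProduct.assoc k V C A).toLinearMap ∘ₗ ρV.rTensor A

/-- The action `V ⊗ μ` on `V ⊗ A`. -/
noncomputable def actVA (k : Type) (A V : Type) [Field k] [Ring A] [Algebra k A]
    [AddCommGroup V] [Module k V] :
    (V ⊗[k] A) ⊗[k] A →ₗ[k] V ⊗[k] A :=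
  (mul' k A).lTensor V ∘ₗ (TensorProduct.assoc k V A A).toLinearMap

/-- The canonical map `A ⊗ₖ A → A ⊗ C`, `a ⊗ a' ↦ a a'₍₀₎ ⊗ a'₍₁₎`. -/
noncomputable def canHat (ΔA : A →ₗ[k] A ⊗[k] C) : A ⊗[k] A →ₗ[k] A ⊗[k] C :=
  (mul' k A).rTensor C ∘ₗ (TensorProduct.assoc k A A C).symm.toLinearMap ∘ₗ ΔA.lTensor A

/-- The subspace of relations defining `A ⊗_B A` inside `A ⊗ₖ A`. -/
noncomputable def relSub (k : Type) [Field k] {A : Type} [Ring A] [Algebra k A]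
    (B : Set A) : Submodule k (A ⊗[k] A) :=
  Submodule.span k {x | ∃ a a' b : A, b ∈ B ∧ x = (a * b) ⊗ₜ[k] a' - a ⊗ₜ[k] (b * a')}

/-- Convolution product of `f g : C → A`. -/
noncomputable def conv (f g : C →ₗ[k] A) : C →ₗ[k] A :=
  mul' k A ∘ₗ TensorProduct.map f g ∘ₗ Coalgebra.comul (R := k)

/-- The convolution unit `η ∘ ε`. -/
noncomputable def convUnit (k C A : Type) [Field k] [Ring A] [Algebra k A]
    [AddCommGroup C] [Module k C] [Coalgebra k C] : C →ₗ[k] A :=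
  Algebra.linearMap k A ∘ₗ Coalgebra.counit (R := k)

variable (k) in
/-- The subalgebra-defining set `B = {b ∈ A : ∀ a, Δ_A(ba) = bΔ_A(a)}`. -/
noncomputable def coinvB (ΔA : A →ₗ[k] A ⊗[k] C) : Set A :=
  {b | ∀ a : A, ΔA (b * a) = (LinearMap.mulLeft k b).rTensor C (ΔA a)}

/-- `A` as a right module over itself. -/
noncomputable def mulRAct (k A : Type) [Field k] [Ring A] [Algebra k A] : RAct k A A where
  act := mul' k A
  act_one := fun m => by simp [LinearMap.mul'_apply]
  act_mul := fun m a b => by simp [LinearMap.mul'_apply, mul_assoc]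

variable (k) in
/-- The `B`-balancing relations inside `I ⊗ₖ A` for a right ideal `I` of `B ⊆ A`
(the kernel of `I ⊗ₖ A → I ⊗_B A`). -/
noncomputable def idealRel (B : Set A) (I : Submodule k A) : Submodule k (↥I ⊗[k] A) :=
  Submodule.span k {z | ∃ (x : I) (b a : A), b ∈ B ∧ ∃ h : (x : A) * b ∈ I,
    z = (⟨(x : A) * b, h⟩ : I) ⊗ₜ[k] a - x ⊗ₜ[k] (b * a)}

variable (k) in
/-- `A` is a faithfully flat left module over the subalgebra determined by
`B ⊆ A`: flatness is expressed by the standard right-ideal criterion (for every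
right ideal `I` of `B`, the map `I ⊗_B A → A` is injective, i.e. the kernel of
`I ⊗ₖ A → A` consists exactly of the `B`-balancing relations), and faithfulness by
`I·A ≠ A` for every proper right ideal `I` of `B`. -/
def FaithfullyFlatLeftOver (B : Set A) : Prop :=
  (∀ I : Submodule k A, (I : Set A) ⊆ B → (∀ x ∈ I, ∀ b ∈ B, x * b ∈ I) →
    LinearMap.ker (mul' k A ∘ₗ I.subtype.rTensor A) = idealRel k B I) ∧
  (∀ I : Submodule k A, (I : Set A) ⊆ B → (∀ x ∈ I, ∀ b ∈ B, x * b ∈ I) →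
    (I : Set A) ≠ B →
    Submodule.span k {y | ∃ x ∈ I, ∃ a : A, y = x * a} ≠ (⊤ : Submodule k A))


namespace St15
set_option linter.unusedSectionVars false

variable {k A C : Type} [Field k] [Ring A] [Algebra k A]
  [AddCommGroup C] [Module k C] [Coalgebra k C]

theorem mr (X : Type) [AddCommGroup X] [Module k X] (y : A) (w : A ⊗[k] X) :
    (mul' k A).rTensor X ((TensorProduct.assoc k A A X).symm (y ⊗ₜ[k] w)) =
      (LinearMap.mulLeft k y).rTensor X w := by
  induction w using TensorProduct.induction_on with
  | zero => simp
  | tmul u x => simp [mul'_apply]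
  | add u v hu hv => simp only [tmul_add, map_add, hu, hv]

theorem mlrr (X : Type) [AddCommGroup X] [Module k X] (a b : A) (w : A ⊗[k] X) :
    (mulLeft k a).rTensor X ((mulLeft k b).rTensor X w) = (mulLeft k (a*b)).rTensor X w := by
  rw [LinearMap.mulLeft_mul, LinearMap.rTensor_comp, LinearMap.comp_apply]

noncomputable def Kmap (E : Entwining k A C) : (A ⊗[k] C) ⊗[k] A →ₗ[k] A ⊗[k] C :=
  (mul' k A).rTensor C ∘ₗ (TensorProduct.assoc k A A C).symm.toLinearMap ∘ₗ
    E.ψ.lTensor A ∘ₗ (TensorProduct.assoc k A C A).toLinearMap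

theorem Kmap_tmul (E : Entwining k A C) (y : A) (c : C) (x : A) :
    Kmap E ((y ⊗ₜ[k] c) ⊗ₜ[k] x) = (mulLeft k y).rTensor C (E.ψ (c ⊗ₜ[k] x)) := by
  simp only [Kmap, LinearMap.comp_apply, LinearEquiv.coe_coe, TensorProduct.assoc_tmul,
    lTensor_tmul]
  exact mr C y _

theorem Kmap_mulLeft (E : Entwining k A C) (b : A) (w : A ⊗[k] C) (x : A) :
    Kmap E (((mulLeft k b).rTensor C w) ⊗ₜ[k] x) =
      (mulLeft k b).rTensor C (Kmap E (w ⊗ₜ[k] x)) := by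
  induction w using TensorProduct.induction_on with
  | zero => simp
  | tmul y c => simp only [rTensor_tmul, mulLeft_apply, Kmap_tmul, mlrr]
  | add u v hu hv => simp only [map_add, add_tmul, hu, hv]

theorem compat_apply (ΔA : RComod k C A) (E : Entwining k A C)
    (hE : EntwCompat E (mulRAct k A) ΔA) (m x : A) :
    ΔA.ρ (m * x) = Kmap E (ΔA.ρ m ⊗ₜ[k] x) := by
  unfold EntwCompat at hE
  have h := LinearMap.congr_fun hE (m ⊗ₜ[k] x)
  simpa [mulRAct, Kmap, mul'_apply, rTensor_tmul] using h

theorem mem_coinvB {ΔA : RComod k C A} {b : A} (hb : b ∈ coinvB k ΔA.ρ) (a : A) :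
    ΔA.ρ (b * a) = (mulLeft k b).rTensor C (ΔA.ρ a) := hb a

noncomputable def Ep (ΔA : RComod k C A) (φ : C →ₗ[k] A) : A →ₗ[k] A :=
  mul' k A ∘ₗ φ.lTensor A ∘ₗ ΔA.ρ

theorem Ep_apply (ΔA : RComod k C A) (φ : C →ₗ[k] A) (a : A) :
    Ep ΔA φ a = mul' k A (φ.lTensor A (ΔA.ρ a)) := rfl

theorem muphi_mulLeft (φ : C →ₗ[k] A) (b : A) (w : A ⊗[k] C) :
    mul' k A (φ.lTensor A ((mulLeft k b).rTensor C w)) =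
      b * mul' k A (φ.lTensor A w) := by
  induction w using TensorProduct.induction_on with
  | zero => simp
  | tmul y c => simp [mul'_apply, mul_assoc]
  | add u v hu hv => simp only [map_add, hu, hv, mul_add]

theorem Ep_left (ΔA : RComod k C A) (φ : C →ₗ[k] A) {b : A}
    (hb : b ∈ coinvB k ΔA.ρ) (a : A) : Ep ΔA φ (b * a) = b * Ep ΔA φ a := by
  rw [Ep_apply, mem_coinvB hb a, muphi_mulLeft, Ep_apply]

theorem Ep_rho (ΔA : RComod k C A) (E : Entwining k A C)
    (hE : EntwCompat E (mulRAct k A) ΔA) (φ : C →ₗ[k] A)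
    (hφ2 : ∀ c : C, E.ψ (φ.lTensor C (Coalgebra.comul (R := k) c)) =
      (LinearMap.mulLeft k (φ c)).rTensor C (ΔA.ρ 1)) (a : A) :
    ΔA.ρ (Ep ΔA φ a) = (mulLeft k (Ep ΔA φ a)).rTensor C (ΔA.ρ 1) := by
  have S : ∀ w : A ⊗[k] C, ΔA.ρ (mul' k A (φ.lTensor A w)) =
      Kmap E ((φ.lTensor (A ⊗[k] C)) ((ΔA.ρ.rTensor C) w)) := by
    intro w
    induction w using TensorProduct.induction_on with
    | zero => simp
    | tmul y c =>
      simp only [lTensor_tmul, mul'_apply, rTensor_tmul]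
      exact compat_apply ΔA E hE y (φ c)
    | add u v hu hv => simp only [map_add, hu, hv]
  have coas : (ΔA.ρ.rTensor C) (ΔA.ρ a) =
      (TensorProduct.assoc k A C C).symm
        ((Coalgebra.comul (R := k) (A := C)).lTensor A (ΔA.ρ a)) := by
    have h := LinearMap.congr_fun ΔA.coassoc a
    simp only [LinearMap.comp_apply, LinearEquiv.coe_coe] at h
    rw [h, LinearEquiv.symm_apply_apply]
  have aux : ∀ v : A ⊗[k] C,
      Kmap E ((φ.lTensor (A ⊗[k] C)) ((TensorProduct.assoc k A C C).symm
        ((Coalgebra.comul (R := k) (A := C)).lTensor A v))) =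
      (mul' k A).rTensor C ((TensorProduct.assoc k A A C).symm
        ((mul' k A (φ.lTensor A v)) ⊗ₜ[k] ΔA.ρ 1)) := by
    intro v
    induction v using TensorProduct.induction_on with
    | zero => simp
    | tmul y c =>
      have W : ∀ w : C ⊗[k] C,
          Kmap E ((φ.lTensor (A ⊗[k] C)) ((TensorProduct.assoc k A C C).symm (y ⊗ₜ[k] w))) =
            (mulLeft k y).rTensor C (E.ψ ((φ.lTensor C) w)) := by
        intro w
        induction w using TensorProduct.induction_on with
        | zero => simp
        | tmul c1 c2 =>
          simp only [TensorProduct.assoc_symm_tmul, lTensor_tmul, Kmap_tmul]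
        | add u v hu hv => simp only [tmul_add, map_add, hu, hv]
      simp only [lTensor_tmul, W (Coalgebra.comul (R := k) c), hφ2 c, mlrr, mr,
        mul'_apply]
    | add u v hu hv =>
      simp only [map_add, hu, hv, add_tmul]
  rw [Ep_apply, S (ΔA.ρ a), coas, aux (ΔA.ρ a), mr, ← Ep_apply]

theorem Ep_mem (ΔA : RComod k C A) (E : Entwining k A C)
    (hE : EntwCompat E (mulRAct k A) ΔA) (φ : C →ₗ[k] A)
    (hφ2 : ∀ c : C, E.ψ (φ.lTensor C (Coalgebra.comul (R := k) c)) =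
      (LinearMap.mulLeft k (φ c)).rTensor C (ΔA.ρ 1)) (a : A) :
    Ep ΔA φ a ∈ coinvB k ΔA.ρ := by
  intro x
  rw [compat_apply ΔA E hE _ x, Ep_rho ΔA E hE φ hφ2 a, Kmap_mulLeft,
    ← compat_apply ΔA E hE 1 x, one_mul]

theorem Ep_right (ΔA : RComod k C A) (E : Entwining k A C)
    (hE : EntwCompat E (mulRAct k A) ΔA) (φ : C →ₗ[k] A)
    (hφ3 : ∀ b ∈ coinvB k ΔA.ρ, ∀ c : C,
      mul' k A (φ.lTensor A (E.ψ (c ⊗ₜ[k] b))) = φ c * b)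
    {b : A} (hb : b ∈ coinvB k ΔA.ρ) (a : A) :
    Ep ΔA φ (a * b) = Ep ΔA φ a * b := by
  rw [Ep_apply, compat_apply ΔA E hE a b, Ep_apply]
  generalize ΔA.ρ a = w
  induction w using TensorProduct.induction_on with
  | zero => simp
  | tmul y c =>
    rw [Kmap_tmul, muphi_mulLeft, hφ3 b hb c, lTensor_tmul, mul'_apply, mul_assoc]
  | add u v hu hv => simp only [add_tmul, map_add, hu, hv, add_mul]

noncomputable def coinvSub (ΔA : RComod k C A) : Submodule k A where
  carrier := coinvB k ΔA.ρ
  zero_mem' := by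
    intro a
    rw [zero_mul, map_zero, ← mr]
    simp
  add_mem' := by
    intro b b' hb hb' a
    rw [add_mul, map_add, mem_coinvB hb a, mem_coinvB hb' a, ← mr, ← mr, ← mr,
      add_tmul, map_add, map_add]
  smul_mem' := by
    intro c b hb a
    rw [smul_mul_assoc, map_smul, mem_coinvB hb a, ← mr, ← mr, ← smul_tmul',
      ← map_smul, ← map_smul]

theorem coe_coinvSub (ΔA : RComod k C A) :
    ((coinvSub ΔA : Submodule k A) : Set A) = coinvB k ΔA.ρ := rfl

end St15

/-- let `A(B)^C` be a `C`-Galois extension with canonical entwining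
map `ψ`, and `φ : C → A` with `1₍₀₎φ(1₍₁₎) = 1` and
`ψ(c₍₁₎ ⊗ φ(c₍₂₎)) = φ(c)1₍₀₎ ⊗ 1₍₁₎`. If `b_αφ(c^α) = φ(c)b` for all `b ∈ B`,
`c ∈ C`, then `A` is faithfully flat as a left `B`-module. -/
theorem statement15 {k A C : Type} [Field k] [Ring A] [Algebra k A]
    [AddCommGroup C] [Module k C] [Coalgebra k C]
    (ΔA : RComod k C A)
    (hsurj : Function.Surjective (canHat ΔA.ρ))
    (hker : LinearMap.ker (canHat ΔA.ρ) = relSub k (coinvB k ΔA.ρ))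
    (E : Entwining k A C) (hE : EntwCompat E (mulRAct k A) ΔA)
    (φ : C →ₗ[k] A)
    (hφ1 : mul' k A (φ.lTensor A (ΔA.ρ 1)) = 1)
    (hφ2 : ∀ c : C, E.ψ (φ.lTensor C (Coalgebra.comul (R := k) c)) =
      (LinearMap.mulLeft k (φ c)).rTensor C (ΔA.ρ 1))
    (hφ3 : ∀ b ∈ coinvB k ΔA.ρ, ∀ c : C,
      mul' k A (φ.lTensor A (E.ψ (c ⊗ₜ[k] b))) = φ c * b) :
    FaithfullyFlatLeftOver k (coinvB k ΔA.ρ) := by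
  classical
  set B := coinvB k ΔA.ρ with hB
  set Epm := St15.Ep ΔA φ with hEpm
  have hEp1 : Epm 1 = 1 := hφ1
  have hEpmem : ∀ a, Epm a ∈ B := St15.Ep_mem ΔA E hE φ hφ2
  have hEpL : ∀ {b}, b ∈ B → ∀ a, Epm (b*a) = b * Epm a :=
    fun hb a => St15.Ep_left ΔA φ hb a
  have hEpR : ∀ {b}, b ∈ B → ∀ a, Epm (a*b) = Epm a * b :=
    fun hb a => St15.Ep_right ΔA E hE φ hφ3 hb a
  obtain ⟨σ, hσ⟩ := (canHat ΔA.ρ).exists_rightInverse_of_surjective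
    (LinearMap.range_eq_top.2 hsurj)
  set l0 : C →ₗ[k] A ⊗[k] A := σ ∘ₗ (TensorProduct.mk k A C) 1 with hl0
  have hcanl0 : ∀ c, canHat ΔA.ρ (l0 c) = (1:A) ⊗ₜ[k] c := by
    intro c
    have := LinearMap.congr_fun hσ ((1:A) ⊗ₜ[k] c)
    simpa [hl0] using this
  set M' : A ⊗[k] C →ₗ[k] A ⊗[k] A :=
    (mul' k A).rTensor A ∘ₗ (TensorProduct.assoc k A A A).symm.toLinearMap ∘ₗ
      l0.lTensor A with hM'def
  have hM' : ∀ (y : A) (c : C), M' (y ⊗ₜ[k] c) = (mulLeft k y).rTensor A (l0 c) := by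
    intro y c
    simp only [hM'def, LinearMap.comp_apply, lTensor_tmul, LinearEquiv.coe_coe]
    exact St15.mr A y _
  have canHat_tmul : ∀ (u v : A),
      canHat ΔA.ρ (u ⊗ₜ[k] v) = (mulLeft k u).rTensor C (ΔA.ρ v) := by
    intro u v
    simp only [canHat, LinearMap.comp_apply, lTensor_tmul, LinearEquiv.coe_coe]
    exact St15.mr C u _
  have canHat_mulLeft : ∀ (y : A) (w : A ⊗[k] A),
      canHat ΔA.ρ ((mulLeft k y).rTensor A w) = (mulLeft k y).rTensor C (canHat ΔA.ρ w) := by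
    intro y w
    induction w using TensorProduct.induction_on with
    | zero => simp
    | tmul u v => simp only [rTensor_tmul, mulLeft_apply, canHat_tmul, St15.mlrr]
    | add u v hu hv => simp only [map_add, hu, hv]
  have hcanM' : ∀ w : A ⊗[k] C, canHat ΔA.ρ (M' w) = w := by
    intro w
    induction w using TensorProduct.induction_on with
    | zero => simp
    | tmul y c => rw [hM', canHat_mulLeft, hcanl0, rTensor_tmul, mulLeft_apply, mul_one]
    | add u v hu hv => simp only [map_add, hu, hv]
  set L : A →ₗ[k] A ⊗[k] A := M' ∘ₗ ΔA.ρ with hLdef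
  have hLcan : ∀ a : A, canHat ΔA.ρ (L a) = ΔA.ρ a := by
    intro a; rw [hLdef, LinearMap.comp_apply, hcanM']
  have hcan1 : ∀ a : A, canHat ΔA.ρ ((1:A) ⊗ₜ[k] a) = ΔA.ρ a := by
    intro a; rw [canHat_tmul, LinearMap.mulLeft_one, LinearMap.rTensor_id, LinearMap.id_apply]
  have hLrel : ∀ a : A, L a - (1:A) ⊗ₜ[k] a ∈ relSub k B := by
    intro a
    rw [← hker, LinearMap.mem_ker, map_sub, hLcan, hcan1, sub_self]
  have hQrel : ∀ z ∈ relSub k B, mul' k A (Epm.rTensor A z) = 0 := by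
    intro z hz
    have hle : relSub k B ≤ LinearMap.ker (mul' k A ∘ₗ Epm.rTensor A) := by
      rw [relSub]
      apply Submodule.span_le.2
      rintro _ ⟨a, a', b, hb, rfl⟩
      simp only [SetLike.mem_coe, LinearMap.mem_ker, map_sub, LinearMap.comp_apply,
        rTensor_tmul, mul'_apply]
      rw [hEpR hb a, mul_assoc, sub_self]
    exact hle hz
  have hA1 : ∀ a, mul' k A (Epm.rTensor A (L a)) = a := by
    intro a
    have h := hQrel _ (hLrel a)
    rw [map_sub, map_sub, sub_eq_zero] at h
    rw [h, rTensor_tmul, mul'_apply, hEp1, one_mul]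
  have hML : ∀ (b : A) (w : A ⊗[k] C),
      M' ((mulLeft k b).rTensor C w) = (mulLeft k b).rTensor A (M' w) := by
    intro b w
    induction w using TensorProduct.induction_on with
    | zero => simp
    | tmul y c => rw [rTensor_tmul, mulLeft_apply, hM', hM', St15.mlrr]
    | add u v hu hv => simp only [map_add, hu, hv]
  have hA2 : ∀ b ∈ B, ∀ a,
      Epm.rTensor A (L (b*a)) = (mulLeft k b).rTensor A (Epm.rTensor A (L a)) := by
    intro b hb a
    have hcomm : Epm ∘ₗ mulLeft k b = mulLeft k b ∘ₗ Epm := by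
      ext x
      simp only [LinearMap.comp_apply, mulLeft_apply]
      exact hEpL hb x
    have hcommT : ∀ w : A ⊗[k] A, Epm.rTensor A ((mulLeft k b).rTensor A w) =
        (mulLeft k b).rTensor A (Epm.rTensor A w) := by
      intro w
      rw [← LinearMap.rTensor_comp_apply, hcomm, LinearMap.rTensor_comp_apply]
    have e1 : L (b*a) = (mulLeft k b).rTensor A (L a) := by
      show M' (ΔA.ρ (b*a)) = _
      rw [St15.mem_coinvB hb a, hML]
      rfl
    rw [e1, hcommT]
  unfold FaithfullyFlatLeftOver
  constructor
  · -- flatness: ideal criterion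
    intro I hIB hstab
    set Bs : Submodule k A := St15.coinvSub ΔA with hBsdef
    set Ep' : A →ₗ[k] Bs := Epm.codRestrict Bs (fun a => hEpmem a) with hEp'
    set st : A →ₗ[k] Bs ⊗[k] A := Ep'.rTensor A ∘ₗ L with hst
    have hsubs : (Bs.subtype.rTensor A) ∘ₗ Ep'.rTensor A = Epm.rTensor A := by
      rw [← LinearMap.rTensor_comp]
      congr 1
    have hsubst : ∀ a, (Bs.subtype.rTensor A) (st a) = Epm.rTensor A (L a) := by
      intro a
      rw [hst, LinearMap.comp_apply, ← LinearMap.comp_apply (Bs.subtype.rTensor A), hsubs]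
    set mI : ↥I ⊗[k] ↥Bs →ₗ[k] ↥I := TensorProduct.lift
      (LinearMap.mk₂ k (fun x b => (⟨(x:A)*(b:A), hstab _ x.2 _ b.2⟩ : ↥I))
        (fun x y b => Subtype.ext (by simp [add_mul]))
        (fun c x b => Subtype.ext (by simp [smul_mul_assoc]))
        (fun x b b' => Subtype.ext (by simp [mul_add]))
        (fun c x b => Subtype.ext (by simp [mul_smul_comm]))) with hmIdef
    have hmI : ∀ (x : ↥I) (b : ↥Bs), ((mI (x ⊗ₜ[k] b) : ↥I) : A) = (x:A)*(b:A) := by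
      intro x b; rw [hmIdef]; rfl
    set MT : ↥I ⊗[k] (Bs ⊗[k] A) →ₗ[k] ↥I ⊗[k] A :=
      mI.rTensor A ∘ₗ (TensorProduct.assoc k ↥I ↥Bs A).symm.toLinearMap with hMT
    have hMTt : ∀ (x : ↥I) (b : ↥Bs) (v : A),
        MT (x ⊗ₜ[k] (b ⊗ₜ[k] v)) = (mI (x ⊗ₜ[k] b)) ⊗ₜ[k] v := by
      intro x b v
      simp only [hMT, LinearMap.comp_apply, LinearEquiv.coe_coe,
        TensorProduct.assoc_symm_tmul, rTensor_tmul]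
    set Θ : ↥I ⊗[k] A →ₗ[k] ↥I ⊗[k] A := MT ∘ₗ st.lTensor ↥I with hΘ
    apply le_antisymm
    · intro z hz
      rw [LinearMap.mem_ker, LinearMap.comp_apply] at hz
      have hC1 : ∀ (x : ↥I) (w : Bs ⊗[k] A),
          x ⊗ₜ[k] (mul' k A ((Bs.subtype.rTensor A) w)) - MT (x ⊗ₜ[k] w)
            ∈ idealRel k B I := by
        intro x w
        induction w using TensorProduct.induction_on with
        | zero => simpa using (idealRel k B I).zero_mem
        | tmul b v =>
          rw [hMTt, rTensor_tmul, mul'_apply]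
          have hb' : (b:A) ∈ B := b.2
          have hx : mI (x ⊗ₜ[k] b) = (⟨(x:A)*(b:A), hstab _ x.2 _ hb'⟩ : ↥I) :=
            Subtype.ext (hmI x b)
          rw [hx]
          have hn : (-1 : k) • ((⟨(x:A)*(b:A), hstab _ x.2 _ hb'⟩ : ↥I) ⊗ₜ[k] v - x ⊗ₜ[k] ((b:A) * v))
              ∈ idealRel k B I :=
            Submodule.smul_mem _ _ (Submodule.subset_span ⟨x, (b:A), v, hb', hstab _ x.2 _ hb', rfl⟩)
          convert hn using 1
          exact ((neg_one_smul k _).trans (neg_sub _ _)).symm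
        | add u v hu hv =>
          have := add_mem hu hv
          convert this using 1
          simp only [map_add, tmul_add]
          abel
      have hAz' : ∀ y : ↥I ⊗[k] A, y - Θ y ∈ idealRel k B I := by
        intro y
        induction y using TensorProduct.induction_on with
        | zero => simpa using (idealRel k B I).zero_mem
        | tmul x a =>
          have h1 : mul' k A ((Bs.subtype.rTensor A) (st a)) = a := by
            rw [hsubst, hA1]
          have h2 := hC1 x (st a)
          rw [h1] at h2
          simpa [hΘ, lTensor_tmul] using h2
        | add u v hu hv =>
          have := add_mem hu hv
          convert this using 1
          rw [map_add]
          abel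
      have hC2 : ∀ (x : ↥I) (w : Bs ⊗[k] A),
          (I.subtype.rTensor A) (MT (x ⊗ₜ[k] w)) =
            (mulLeft k (x:A)).rTensor A ((Bs.subtype.rTensor A) w) := by
        intro x w
        induction w using TensorProduct.induction_on with
        | zero => simp
        | tmul b v =>
          rw [hMTt, rTensor_tmul, rTensor_tmul, rTensor_tmul]
          simp only [Submodule.coe_subtype, mulLeft_apply, hmI]
        | add u v hu hv => simp only [map_add, tmul_add, hu, hv]
      have hkey : ∀ z : ↥I ⊗[k] A, (I.subtype.rTensor A) (Θ z) =
          Epm.rTensor A (L (mul' k A ((I.subtype.rTensor A) z))) := by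
        intro z
        induction z using TensorProduct.induction_on with
        | zero => simp
        | tmul x a =>
          rw [hΘ, LinearMap.comp_apply, lTensor_tmul, hC2 x (st a), hsubst,
            ← hA2 (x:A) (hIB x.2) a, rTensor_tmul, mul'_apply]
          rfl
        | add u v hu hv => simp only [map_add, hu, hv]
      have hΘz : (I.subtype.rTensor A) (Θ z) = 0 := by
        rw [hkey z, hz, map_zero, map_zero]
      have hinj : Function.Injective (I.subtype.rTensor A) :=
        Module.Flat.rTensor_preserves_injective_linearMap I.subtype I.injective_subtype
      have hΘ0 : Θ z = 0 := hinj (by rw [hΘz, map_zero])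
      have : z = z - Θ z := by rw [hΘ0]; exact (sub_zero z).symm
      rw [this]
      exact hAz' z
    · rw [idealRel]
      apply Submodule.span_le.2
      rintro _ ⟨x, b, a, hbB, hxb, rfl⟩
      simp only [SetLike.mem_coe, LinearMap.mem_ker, map_sub, LinearMap.comp_apply,
        rTensor_tmul, mul'_apply, Submodule.coe_subtype]
      rw [mul_assoc, sub_self]
  · -- faithfulness
    intro I hIB hstab hne hspan
    have h1 : (1:A) ∈ Submodule.span k {y | ∃ x ∈ I, ∃ a : A, y = x * a} := by
      rw [hspan]; trivial
    have hmem : ∀ y ∈ Submodule.span k {y | ∃ x ∈ I, ∃ a : A, y = x * a}, Epm y ∈ I := by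
      intro y hy
      induction hy using Submodule.span_induction with
      | mem y hy =>
        obtain ⟨x, hxI, a, rfl⟩ := hy
        rw [hEpL (hIB hxI) a]
        exact hstab x hxI _ (hEpmem a)
      | zero => simp
      | add u v _ _ hu hv => rw [map_add]; exact add_mem hu hv
      | smul c u _ hu => rw [map_smul]; exact Submodule.smul_mem _ _ hu
    have h2 : (1:A) ∈ I := by
      have := hmem 1 h1
      rwa [hEp1] at this
    apply hne
    apply Set.Subset.antisymm hIB
    intro b hb
    have := hstab 1 h2 b hb
    rwa [one_mul] at this
end

section
/- Let A(B)^C be a C-Galois extension. If there exists a left and right B-linear map s : A → B with s(1) = 1 (a unital B-bimodule map), then A is faithfully flat as a left B-module. -/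
open TensorProduct LinearMap

variable {k A C M : Type} [Field k] [Ring A] [Algebra k A]
  [AddCommGroup C] [Module k C] [Coalgebra k C] [AddCommGroup M] [Module k M]

section Statement16Aux

/-- `canHat` on a pure tensor. -/
lemma canHat_tmul (ΔA : A →ₗ[k] A ⊗[k] C) (a a' : A) :
    canHat ΔA (a ⊗ₜ[k] a') = (mulLeft k a).rTensor C (ΔA a') := by
  simp only [canHat, LinearMap.coe_comp, Function.comp_apply, LinearMap.lTensor_tmul,
    LinearEquiv.coe_coe]
  induction ΔA a' using TensorProduct.induction_on with
  | zero => simp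
  | tmul x c => simp [TensorProduct.assoc_symm_tmul, LinearMap.mul'_apply]
  | add u v hu hv => simp only [tmul_add, map_add, hu, hv]

/-- `canHat` is left `A`-linear. -/
lemma canHat_mulLeft (ΔA : A →ₗ[k] A ⊗[k] C) (b : A) (u : A ⊗[k] A) :
    canHat ΔA ((mulLeft k b).rTensor A u) = (mulLeft k b).rTensor C (canHat ΔA u) := by
  induction u using TensorProduct.induction_on with
  | zero => simp
  | tmul a a' =>
      rw [LinearMap.rTensor_tmul, LinearMap.mulLeft_apply, canHat_tmul, canHat_tmul,
        LinearMap.mulLeft_mul, LinearMap.rTensor_comp, LinearMap.comp_apply]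
  | add u v hu hv => simp only [map_add, hu, hv]

/-- The map `A ⊗ C → A ⊗ A`, `a ⊗ c ↦ a·ℓ(c)` for a lift `ℓ` of the translation map. -/
noncomputable def entF (ℓ : C →ₗ[k] A ⊗[k] A) : A ⊗[k] C →ₗ[k] A ⊗[k] A :=
  TensorProduct.lift (LinearMap.mk₂ k (fun a c => (mulLeft k a).rTensor A (ℓ c))
    (fun a a' c => by
      rw [show mulLeft k (a + a') = mulLeft k a + mulLeft k a' from
        LinearMap.ext fun x => add_mul a a' x, LinearMap.rTensor_add, LinearMap.add_apply])
    (fun m a c => by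
      rw [show mulLeft k (m • a) = m • mulLeft k a from
        LinearMap.ext fun x => smul_mul_assoc m a x, LinearMap.rTensor_smul,
        LinearMap.smul_apply])
    (fun a c c' => by rw [map_add, map_add])
    (fun m a c => by rw [map_smul, map_smul]))

lemma entF_tmul (ℓ : C →ₗ[k] A ⊗[k] A) (a : A) (c : C) :
    entF ℓ (a ⊗ₜ[k] c) = (mulLeft k a).rTensor A (ℓ c) := by
  simp [entF]

lemma entF_mulLeft (ℓ : C →ₗ[k] A ⊗[k] A) (b : A) (w : A ⊗[k] C) :
    entF ℓ ((mulLeft k b).rTensor C w) = (mulLeft k b).rTensor A (entF ℓ w) := by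
  induction w using TensorProduct.induction_on with
  | zero => simp
  | tmul a c =>
      rw [LinearMap.rTensor_tmul, LinearMap.mulLeft_apply, entF_tmul, entF_tmul,
        LinearMap.mulLeft_mul, LinearMap.rTensor_comp, LinearMap.comp_apply]
  | add u v hu hv => simp only [map_add, hu, hv]

lemma canHat_entF (ΔA : A →ₗ[k] A ⊗[k] C) (ℓ : C →ₗ[k] A ⊗[k] A)
    (hℓ : ∀ c, canHat ΔA (ℓ c) = (1 : A) ⊗ₜ[k] c) (w : A ⊗[k] C) :
    canHat ΔA (entF ℓ w) = w := by
  induction w using TensorProduct.induction_on with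
  | zero => simp
  | tmul a c =>
      rw [entF_tmul, canHat_mulLeft, hℓ, LinearMap.rTensor_tmul, LinearMap.mulLeft_apply,
        mul_one]
  | add u v hu hv => simp only [map_add, hu, hv]

/-- The bilinear map `I × A → I`, `(x, c) ↦ x · s(c)`. -/
noncomputable def tMap {I : Submodule k A} (s : A →ₗ[k] A)
    (h : ∀ (x : ↥I) (c : A), (x : A) * s c ∈ I) : ↥I →ₗ[k] A →ₗ[k] ↥I :=
  LinearMap.mk₂ k (fun x c => (⟨(x : A) * s c, h x c⟩ : ↥I))
    (fun x y c => Subtype.ext (by simp [add_mul]))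
    (fun m x c => Subtype.ext (by simp [smul_mul_assoc]))
    (fun x c c' => Subtype.ext (by simp [mul_add]))
    (fun m x c => Subtype.ext (by simp [mul_smul_comm]))

lemma tMap_apply {I : Submodule k A} (s : A →ₗ[k] A)
    (h : ∀ (x : ↥I) (c : A), (x : A) * s c ∈ I) (x : ↥I) (c : A) :
    tMap s h x c = (⟨(x : A) * s c, h x c⟩ : ↥I) := rfl

/-- The map `γ : I ⊗ A → I ⊗ A`, `x ⊗ a ↦ (t x ⊗ id)(χ a)`. -/
noncomputable def gammaMap {I : Submodule k A} (χ : A →ₗ[k] A ⊗[k] A)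
    (t : ↥I →ₗ[k] A →ₗ[k] ↥I) : ↥I ⊗[k] A →ₗ[k] ↥I ⊗[k] A :=
  TensorProduct.lift (LinearMap.mk₂ k (fun x a => (t x).rTensor A (χ a))
    (fun x y a => by rw [map_add, LinearMap.rTensor_add, LinearMap.add_apply])
    (fun m x a => by rw [map_smul, LinearMap.rTensor_smul, LinearMap.smul_apply])
    (fun x a a' => by rw [map_add, map_add])
    (fun m x a => by rw [map_smul, map_smul]))

lemma gammaMap_tmul {I : Submodule k A} (χ : A →ₗ[k] A ⊗[k] A)
    (t : ↥I →ₗ[k] A →ₗ[k] ↥I) (x : ↥I) (a : A) :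
    gammaMap χ t (x ⊗ₜ[k] a) = (t x).rTensor A (χ a) := by
  simp [gammaMap]

end Statement16Aux

/-- if a `C`-Galois extension `A(B)^C` admits a unital `B`-bimodule
map `s : A → B`, then `A` is faithfully flat as a left `B`-module. -/
theorem statement16 {k A C : Type} [Field k] [Ring A] [Algebra k A]
    [AddCommGroup C] [Module k C] [Coalgebra k C]
    (ΔA : RComod k C A)
    (hsurj : Function.Surjective (canHat ΔA.ρ))
    (hker : LinearMap.ker (canHat ΔA.ρ) = relSub k (coinvB k ΔA.ρ))
    (s : A →ₗ[k] A)
    (hsB : ∀ a : A, s a ∈ coinvB k ΔA.ρ)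
    (hs1 : s 1 = 1)
    (hsl : ∀ b ∈ coinvB k ΔA.ρ, ∀ a : A, s (b * a) = b * s a)
    (hsr : ∀ b ∈ coinvB k ΔA.ρ, ∀ a : A, s (a * b) = s a * b) :
    FaithfullyFlatLeftOver k (coinvB k ΔA.ρ) := by
  classical
  constructor
  · -- flatness: the right-ideal criterion
    intro I hIB hIr
    obtain ⟨r, hr⟩ := (canHat ΔA.ρ).exists_rightInverse_of_surjective
      (LinearMap.range_eq_top.mpr hsurj)
    set ℓ : C →ₗ[k] A ⊗[k] A := r ∘ₗ (TensorProduct.mk k A C) 1 with hℓdef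
    have hℓ : ∀ c, canHat ΔA.ρ (ℓ c) = (1 : A) ⊗ₜ[k] c := by
      intro c
      have h := DFunLike.congr_fun hr ((1 : A) ⊗ₜ[k] c)
      simpa [hℓdef] using h
    set χ : A →ₗ[k] A ⊗[k] A := entF ℓ ∘ₗ ΔA.ρ with hχdef
    have hχcan : ∀ a, canHat ΔA.ρ (χ a) = ΔA.ρ a := fun a => canHat_entF _ _ hℓ _
    have hχB : ∀ b ∈ coinvB k ΔA.ρ, ∀ a, χ (b * a) = (mulLeft k b).rTensor A (χ a) := by
      intro b hb a
      have h1 : ΔA.ρ (b * a) = (mulLeft k b).rTensor C (ΔA.ρ a) := hb a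
      simp only [hχdef, LinearMap.coe_comp, Function.comp_apply]
      rw [h1, entF_mulLeft]
    have hβrel : ∀ u ∈ relSub k (coinvB k ΔA.ρ), mul' k A (s.rTensor A u) = 0 := by
      intro u hu
      induction hu using Submodule.span_induction with
      | mem w hw =>
          obtain ⟨a, a', b, hb, rfl⟩ := hw
          rw [map_sub, map_sub, LinearMap.rTensor_tmul, LinearMap.rTensor_tmul,
            LinearMap.mul'_apply, LinearMap.mul'_apply, hsr b hb a, mul_assoc, sub_self]
      | zero => simp
      | add x y hx hy ihx ihy => rw [map_add, map_add, ihx, ihy, add_zero]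
      | smul m x hx ihx => rw [map_smul, map_smul, ihx, smul_zero]
    have hχβ : ∀ a, mul' k A (s.rTensor A (χ a)) = a := by
      intro a
      have hmem : χ a - (1 : A) ⊗ₜ[k] a ∈ relSub k (coinvB k ΔA.ρ) := by
        rw [← hker, LinearMap.mem_ker, map_sub, hχcan, canHat_tmul,
          LinearMap.mulLeft_one, LinearMap.rTensor_id, LinearMap.id_apply, sub_self]
      have h0 := hβrel _ hmem
      rw [map_sub, map_sub, sub_eq_zero] at h0
      rw [h0, LinearMap.rTensor_tmul, LinearMap.mul'_apply, hs1, one_mul]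
    have htmem : ∀ (x : ↥I) (c : A), (x : A) * s c ∈ I := fun x c => hIr x x.2 (s c) (hsB c)
    set t := tMap (I := I) s htmem with htdef
    set γ := gammaMap χ t with hγdef
    have hsub : ∀ (x : ↥I), I.subtype ∘ₗ (t x) = s ∘ₗ mulLeft k (x : A) := by
      intro x
      ext c
      simp only [LinearMap.coe_comp, Function.comp_apply, Submodule.coe_subtype,
        LinearMap.mulLeft_apply, htdef, tMap_apply]
      rw [hsl (x : A) (hIB x.2) c]
    have key : ∀ z : ↥I ⊗[k] A, I.subtype.rTensor A (γ z)
        = s.rTensor A (χ (mul' k A (I.subtype.rTensor A z))) := by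
      intro z
      induction z using TensorProduct.induction_on with
      | zero => simp
      | tmul x a =>
          have hR : mul' k A (I.subtype.rTensor A (x ⊗ₜ[k] a)) = (x : A) * a := by
            rw [LinearMap.rTensor_tmul, LinearMap.mul'_apply, Submodule.coe_subtype]
          rw [hγdef, gammaMap_tmul, hR, hχB (x : A) (hIB x.2) a,
            ← LinearMap.rTensor_comp_apply, ← LinearMap.rTensor_comp_apply, hsub x]
      | add z w hz hw => simp only [map_add, hz, hw]
    have hrel : ∀ z : ↥I ⊗[k] A, z - γ z ∈ idealRel k (coinvB k ΔA.ρ) I := by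
      intro z
      induction z using TensorProduct.induction_on with
      | zero => rw [map_zero, sub_zero (G := ↥I ⊗[k] A)]; exact Submodule.zero_mem _
      | tmul x a =>
          have sub : ∀ u : A ⊗[k] A,
              x ⊗ₜ[k] (mul' k A (s.rTensor A u)) - (t x).rTensor A u
                ∈ idealRel k (coinvB k ΔA.ρ) I := by
            intro u
            induction u using TensorProduct.induction_on with
            | zero => simpa using Submodule.zero_mem _
            | tmul a' a'' =>
                have hgen : (⟨(x : A) * s a', htmem x a'⟩ : ↥I) ⊗ₜ[k] a''
                    - x ⊗ₜ[k] (s a' * a'') ∈ idealRel k (coinvB k ΔA.ρ) I :=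
                  Submodule.subset_span ⟨x, s a', a'', hsB a', htmem x a', rfl⟩
                rw [LinearMap.rTensor_tmul, LinearMap.rTensor_tmul, LinearMap.mul'_apply,
                  htdef, tMap_apply]
                convert Submodule.smul_mem _ (-1 : k) hgen using 1
                rw [neg_one_smul (R := k) (M := ↥I ⊗[k] A), neg_sub (α := ↥I ⊗[k] A)]
            | add u v hu hv =>
                rw [map_add, map_add, tmul_add, map_add, add_sub_add_comm (α := ↥I ⊗[k] A)]
                exact add_mem hu hv
          have h2 := sub (χ a)
          rw [hχβ a] at h2
          rw [hγdef, gammaMap_tmul]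
          exact h2
      | add z w hz hw =>
          rw [map_add, add_sub_add_comm (α := ↥I ⊗[k] A)]
          exact add_mem hz hw
    apply le_antisymm
    · intro z hz
      rw [LinearMap.mem_ker, LinearMap.comp_apply] at hz
      have h0 : I.subtype.rTensor A (γ z) = 0 := by
        rw [key z, hz, map_zero, map_zero]
      have hinj : Function.Injective (I.subtype.rTensor A) :=
        Module.Flat.rTensor_preserves_injective_linearMap I.subtype I.injective_subtype
      have hγ0 : γ z = 0 := hinj (by rw [h0, map_zero])
      have hz2 := hrel z
      rwa [hγ0, sub_zero (G := ↥I ⊗[k] A)] at hz2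
    · refine Submodule.span_le.mpr ?_
      rintro w ⟨x, b, a, hb, h, rfl⟩
      simp only [SetLike.mem_coe, LinearMap.mem_ker, LinearMap.comp_apply, map_sub,
        LinearMap.rTensor_tmul, LinearMap.mul'_apply, Submodule.coe_subtype]
      rw [mul_assoc, sub_self]
  · -- faithfulness
    intro I hIB hIr hne heq
    have h1mem : (1 : A) ∈ Submodule.span k {y | ∃ x ∈ I, ∃ a : A, y = x * a} := by
      rw [heq]; exact Submodule.mem_top
    have hsI : ∀ y ∈ Submodule.span k {y | ∃ x ∈ I, ∃ a : A, y = x * a}, s y ∈ I := by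
      intro y hy
      induction hy using Submodule.span_induction with
      | mem y hy =>
          obtain ⟨x, hx, a, rfl⟩ := hy
          rw [hsl x (hIB hx) a]
          exact hIr x hx (s a) (hsB a)
      | zero => rw [map_zero]; exact I.zero_mem
      | add x y hx hy ihx ihy => rw [map_add]; exact I.add_mem ihx ihy
      | smul m x hx ihx => rw [map_smul]; exact I.smul_mem m ihx
    have h1I : (1 : A) ∈ I := by
      have hh := hsI 1 h1mem
      rwa [hs1] at hh
    apply hne
    apply Set.Subset.antisymm hIB
    intro b hb
    have hmem := hIr 1 h1I b hb
    rwa [one_mul] at hmem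
end

section
/- A C-Galois extension A(B)^C is cleft (admits a convolution invertible right C-comodule map Φ : C → A) if and only if there exists a left B-module map s : A → B such that the map ŝ : A → B⊗C, ŝ(a) = s(a₍₀₎) ⊗ a₍₁₎, is bijective. -/
/-!
Since `can` is bijective, right multiplication on `A ⊗_B A` transports to a right `A`-action
`x ◁ a` on `A ⊗ C` with `ρ(xy) = ρ(x) ◁ y` and `(b • x) ◁ a = b • (x ◁ a)`; in particular
`b ∈ B` as soon as `ρ(b) = b • ρ(1)`.

Cleft ⇒ normal basis: with `s(a) = a₍₀₎Φ⁻¹(a₍₁₎)`, the convolution identities for `Φ` and the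
action `◁` give `ρ(s a) = s(a) • ρ(1)`, so `s` lands in `B`; and `b ⊗ c ↦ bΦ(c)` inverts `ŝ`,
because `s(a₍₀₎)Φ(a₍₁₎) = a` and `s ∘ Φ = ε`.

Normal basis ⇒ cleft: `Φ = ŝ⁻¹(1 ⊗ -)` is colinear since `ŝ` is, and `Φ⁻¹(c) = ℓ(1 ⊗ c)` where
`ℓ : A ⊗ C ≅ A ⊗_B A → A` is `a ⊗ a' ↦ a s(a')`, well defined because `s` is `B`-linear.
`Φ * Φ⁻¹ = ε` reduces to `s ∘ Φ = ε`; for `Φ⁻¹ * Φ = ε`, both `u ⊗ c ↦ ℓ(u ⊗ c₍₁₎)Φ(c₍₂₎)` and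
`id ⊗ ε` are left `A`-linear and agree on `ρ(A)`, which generates `A ⊗ C` as a left `A`-module.
-/

open TensorProduct LinearMap

variable {k A C M : Type} [Field k] [Ring A] [Algebra k A]
  [AddCommGroup C] [Module k C] [Coalgebra k C] [AddCommGroup M] [Module k M]

open Coalgebra

lemma LinearMap.comp_rightInverse_comp_of_ker_le {R M N P : Type*} [Ring R]
    [AddCommGroup M] [Module R M] [AddCommGroup N] [Module R N] [AddCommGroup P] [Module R P]
    {f : M →ₗ[R] N} {σ : N →ₗ[R] M} (hσ : f ∘ₗ σ = id) {g : M →ₗ[R] P} (h : ker f ≤ ker g) :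
    g ∘ₗ σ ∘ₗ f = g := by
  ext w
  have hw : σ (f w) - w ∈ ker f := by simp [← comp_apply f σ, hσ]
  simpa [sub_eq_zero] using h hw

lemma LinearMap.rTensor_mulLeft_eq_smul {k A M : Type*} [CommSemiring k] [Semiring A]
    [Algebra k A] [AddCommMonoid M] [Module k M] (a : A) (x : A ⊗[k] M) :
    (mulLeft k a).rTensor M x = a • x := by
  induction x using TensorProduct.induction_on with
  | zero => simp
  | tmul y m => simp [smul_tmul']
  | add x y hx hy => simp [hx, hy]

lemma mul'_lTensor_smul {k A M : Type*} [CommSemiring k] [Semiring A] [Algebra k A]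
    [AddCommMonoid M] [Module k M] (f : M →ₗ[k] A) (a : A) (z : A ⊗[k] M) :
    mul' k A (f.lTensor A (a • z)) = a * mul' k A (f.lTensor A z) := by
  induction z using TensorProduct.induction_on with
  | zero => simp
  | tmul x m => simp [smul_tmul', mul_assoc]
  | add x y hx hy => simp only [smul_add, map_add, hx, hy, mul_add]

section CanonicalMap

variable {k A C : Type} [Field k] [Ring A] [Algebra k A] [AddCommGroup C] [Module k C]
  {ρ : A →ₗ[k] A ⊗[k] C}

lemma mem_coinvB_iff {b : A} : b ∈ coinvB k ρ ↔ ∀ a, ρ (b * a) = b • ρ a := by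
  simp only [coinvB, Set.mem_ofPred_eq, rTensor_mulLeft_eq_smul]

lemma canHat_tmul_s18 (a a' : A) : canHat ρ (a ⊗ₜ a') = a • ρ a' := by
  rw [← rTensor_mulLeft_eq_smul]
  simp only [canHat, comp_apply, lTensor_tmul, LinearEquiv.coe_coe]
  induction ρ a' using TensorProduct.induction_on with
  | zero => simp
  | tmul y c => simp
  | add x y hx hy => rw [tmul_add, map_add, map_add, hx, hy, map_add]

lemma canHat_smul (a : A) (w : A ⊗[k] A) : canHat ρ (a • w) = a • canHat ρ w := by
  induction w using TensorProduct.induction_on with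
  | zero => simp
  | tmul x y => simp [smul_tmul', canHat_tmul_s18, mul_smul]
  | add x y hx hy => simp [hx, hy]

lemma relSub_le_comap_lTensor_mulRight (B : Set A) (a : A) :
    relSub k B ≤ (relSub k B).comap ((mulRight k a).lTensor A) := by
  rw [relSub, Submodule.span_le]
  rintro _ ⟨x, y, b, hb, rfl⟩
  exact Submodule.subset_span ⟨x, y * a, b, hb, by simp [mul_assoc]⟩

lemma eq_of_comp_coaction_eq (hsurj : Function.Surjective (canHat ρ)) {F G : A ⊗[k] C →ₗ[k] A}
    (hF : ∀ a z, F (a • z) = a * F z) (hG : ∀ a z, G (a • z) = a * G z)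
    (h : F ∘ₗ ρ = G ∘ₗ ρ) : F = G := by
  refine LinearMap.ext fun z ↦ ?_
  obtain ⟨w, rfl⟩ := hsurj z
  induction w using TensorProduct.induction_on with
  | zero => simp
  | tmul a a' => rw [canHat_tmul_s18, hF, hG, ← comp_apply F, ← comp_apply G, h]
  | add x y hx hy => simp only [map_add, hx, hy]

end CanonicalMap

noncomputable def smulTensor (k A M : Type*) [CommSemiring k] [Semiring A] [Algebra k A]
    [AddCommMonoid M] [Module k M] [Module A M] [IsScalarTower k A M] : A ⊗[k] M →ₗ[k] M :=
  TensorProduct.lift (Algebra.lsmul k k M).toLinearMap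

@[simp]
lemma smulTensor_tmul {k A M : Type*} [CommSemiring k] [Semiring A] [Algebra k A]
    [AddCommMonoid M] [Module k M] [Module A M] [IsScalarTower k A M] (a : A) (m : M) :
    smulTensor k A M (a ⊗ₜ m) = a • m := rfl

section GaloisAction

variable {k A C : Type} [Field k] [Ring A] [Algebra k A] [AddCommGroup C] [Module k C]
  {ρ : A →ₗ[k] A ⊗[k] C} {σ : A ⊗[k] C →ₗ[k] A ⊗[k] A} {B : Set A}

/-- For a Galois extension, `x ⊗ a ↦ can (can⁻¹ x · a)`: the right multiplication of `A ⊗_B A`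
transported along `can`, computed through a linear section `σ` of `canHat`. -/
noncomputable def canAct (ρ : A →ₗ[k] A ⊗[k] C) (σ : A ⊗[k] C →ₗ[k] A ⊗[k] A) :
    (A ⊗[k] C) ⊗[k] A →ₗ[k] A ⊗[k] C :=
  canHat ρ ∘ₗ (mul' k A).lTensor A ∘ₗ (TensorProduct.assoc k A A A).toLinearMap ∘ₗ σ.rTensor A

lemma canAct_tmul (x : A ⊗[k] C) (a : A) :
    canAct ρ σ (x ⊗ₜ a) = canHat ρ ((mulRight k a).lTensor A (σ x)) := by
  simp only [canAct, comp_apply, rTensor_tmul]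
  congr 1
  induction σ x using TensorProduct.induction_on with
  | zero => simp
  | tmul u v => simp
  | add u v hu hv => simp only [add_tmul, map_add, hu, hv]

lemma canAct_canHat_tmul (hσ : canHat ρ ∘ₗ σ = LinearMap.id) (hker : ker (canHat ρ) = relSub k B)
    (w : A ⊗[k] A) (a : A) :
    canAct ρ σ (canHat ρ w ⊗ₜ a) = canHat ρ ((mulRight k a).lTensor A w) := by
  have hrel : ker (canHat ρ) ≤ ker (canHat ρ ∘ₗ (mulRight k a).lTensor A) := by
    rw [ker_comp, hker]
    exact relSub_le_comap_lTensor_mulRight B a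
  rw [canAct_tmul]
  exact congr($(comp_rightInverse_comp_of_ker_le hσ hrel) w)

lemma coaction_mul (hσ : canHat ρ ∘ₗ σ = LinearMap.id) (hker : ker (canHat ρ) = relSub k B)
    (x y : A) :
    ρ (x * y) = canAct ρ σ (ρ x ⊗ₜ y) := by
  calc ρ (x * y) = canHat ρ ((mulRight k y).lTensor A (1 ⊗ₜ x)) := by simp [canHat_tmul_s18]
    _ = canAct ρ σ (ρ x ⊗ₜ y) := by rw [← canAct_canHat_tmul hσ hker, canHat_tmul_s18, one_smul]

lemma canAct_smul_tmul (hσ : canHat ρ ∘ₗ σ = LinearMap.id) (hker : ker (canHat ρ) = relSub k B)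
    (a : A) (x : A ⊗[k] C) (a' : A) :
    canAct ρ σ ((a • x) ⊗ₜ a') = a • canAct ρ σ (x ⊗ₜ a') := by
  have hlTensor : ∀ w : A ⊗[k] A,
      (mulRight k a').lTensor A (a • w) = a • (mulRight k a').lTensor A w := by
    intro w
    induction w using TensorProduct.induction_on with
    | zero => simp
    | tmul u v => simp [smul_tmul']
    | add u v hu hv => simp only [smul_add, map_add, hu, hv]
  obtain ⟨w, rfl⟩ : ∃ w, canHat ρ w = x := ⟨σ x, congr($hσ x)⟩
  rw [← canHat_smul, canAct_canHat_tmul hσ hker, canAct_canHat_tmul hσ hker, hlTensor,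
    canHat_smul]

lemma coaction_comp_mul (hσ : canHat ρ ∘ₗ σ = LinearMap.id) (hker : ker (canHat ρ) = relSub k B) :
    ρ ∘ₗ mul' k A = canAct ρ σ ∘ₗ ρ.rTensor A := by
  ext x y
  exact coaction_mul hσ hker x y

lemma canAct_comp_rTensor_smulTensor (hσ : canHat ρ ∘ₗ σ = LinearMap.id)
    (hker : ker (canHat ρ) = relSub k B) :
    canAct ρ σ ∘ₗ (smulTensor k A (A ⊗[k] C)).rTensor A =
      smulTensor k A (A ⊗[k] C) ∘ₗ (canAct ρ σ).lTensor A ∘ₗ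
        (TensorProduct.assoc k A (A ⊗[k] C) A).toLinearMap := by
  ext a u c a'
  exact canAct_smul_tmul hσ hker a (u ⊗ₜ c) a'

lemma mem_coinvB_of_coaction_eq (hσ : canHat ρ ∘ₗ σ = LinearMap.id)
    (hker : ker (canHat ρ) = relSub k B) {b : A} (hb : ρ b = b • ρ 1) : b ∈ coinvB k ρ := by
  refine mem_coinvB_iff.2 fun a ↦ ?_
  rw [coaction_mul hσ hker, hb, canAct_smul_tmul hσ hker, ← coaction_mul hσ hker, one_mul]

end GaloisAction

section CoactionConvolution

variable {k C V X Y Z W T U : Type} [Field k] [AddCommGroup C] [Module k C]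
  [AddCommGroup V] [Module k V] [AddCommGroup X] [Module k X] [AddCommGroup Y] [Module k Y]
  [AddCommGroup Z] [Module k Z] [AddCommGroup W] [Module k W] [AddCommGroup T] [Module k T]
  [AddCommGroup U] [Module k U]

/-- `v ↦ μ (u v₍₀₎ ⊗ g v₍₁₎)`; over the regular comodule with `μ` the multiplication this is the
convolution product `conv`. -/
noncomputable def coactConv (ρ : V →ₗ[k] V ⊗[k] C) (μ : X ⊗[k] Y →ₗ[k] Z) (u : V →ₗ[k] X)
    (g : C →ₗ[k] Y) : V →ₗ[k] Z :=
  μ ∘ₗ map u g ∘ₗ ρ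

lemma coactConv_comp {ρ : V →ₗ[k] V ⊗[k] C} {ρ' : W →ₗ[k] W ⊗[k] C} {f : V →ₗ[k] W}
    (hf : ρ' ∘ₗ f = f.rTensor C ∘ₗ ρ) (μ : X ⊗[k] Y →ₗ[k] Z) (u : W →ₗ[k] X) (g : C →ₗ[k] Y) :
    coactConv ρ' μ u g ∘ₗ f = coactConv ρ μ (u ∘ₗ f) g := by
  calc coactConv ρ' μ u g ∘ₗ f = μ ∘ₗ map u g ∘ₗ ρ' ∘ₗ f := rfl
    _ = μ ∘ₗ (map u g ∘ₗ f.rTensor C) ∘ₗ ρ := by rw [hf]; rfl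
    _ = coactConv ρ μ (u ∘ₗ f) g := by rw [map_comp_rTensor]; rfl

variable [Coalgebra k C]

variable (k C) in
noncomputable def RComod.regular : RComod k C C where
  ρ := Coalgebra.comul
  coassoc := Coalgebra.coassoc.symm
  counit_id := by ext; simp

lemma coactConv_assoc (ρV : RComod k C V) {μ₁ : X ⊗[k] Y →ₗ[k] Z} {μ₂ : Z ⊗[k] W →ₗ[k] T}
    {ν₁ : Y ⊗[k] W →ₗ[k] U} {ν₂ : X ⊗[k] U →ₗ[k] T}
    (h : μ₂ ∘ₗ μ₁.rTensor W = ν₂ ∘ₗ ν₁.lTensor X ∘ₗ (TensorProduct.assoc k X Y W).toLinearMap)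
    (u : V →ₗ[k] X) (f : C →ₗ[k] Y) (g : C →ₗ[k] W) :
    coactConv ρV.ρ μ₂ (coactConv ρV.ρ μ₁ u f) g =
      coactConv ρV.ρ ν₂ u (coactConv (RComod.regular k C).ρ ν₁ f g) := by
  have hcomul : (ν₂ ∘ₗ ν₁.lTensor X ∘ₗ map u (map f g)) ∘ₗ comul.lTensor V =
      ν₂ ∘ₗ map u (ν₁ ∘ₗ map f g ∘ₗ comul) := by
    ext v c
    simp
  calc coactConv ρV.ρ μ₂ (coactConv ρV.ρ μ₁ u f) g
      = (μ₂ ∘ₗ μ₁.rTensor W) ∘ₗ map (map u f) g ∘ₗ ρV.ρ.rTensor C ∘ₗ ρV.ρ := by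
        rw [coactConv, coactConv, ← rTensor_comp_map, ← map_comp_rTensor]
        simp only [comp_assoc]
    _ = (ν₂ ∘ₗ ν₁.lTensor X ∘ₗ map u (map f g)) ∘ₗ
          (TensorProduct.assoc k V C C).toLinearMap ∘ₗ ρV.ρ.rTensor C ∘ₗ ρV.ρ := by
        rw [h]
        exact congr((ν₂ ∘ₗ ν₁.lTensor X) ∘ₗ $((map_map_comp_assoc_eq u f g).symm) ∘ₗ
          ρV.ρ.rTensor C ∘ₗ ρV.ρ)
    _ = coactConv ρV.ρ ν₂ u (coactConv (RComod.regular k C).ρ ν₁ f g) := by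
        rw [← ρV.coassoc]
        exact congr($hcomul ∘ₗ ρV.ρ)

lemma coactConv_convUnit {A : Type} [Ring A] [Algebra k A] (ρV : RComod k C V) (u : V →ₗ[k] A) :
    coactConv ρV.ρ (mul' k A) u (convUnit k C A) = u := by
  have hcounit : mul' k A ∘ₗ map u (convUnit k C A) =
      u ∘ₗ (TensorProduct.rid k V).toLinearMap ∘ₗ counit.lTensor V := by
    ext v c
    simp [convUnit, Algebra.smul_def, Algebra.commutes]
  calc coactConv ρV.ρ (mul' k A) u (convUnit k C A)
      = u ∘ₗ (TensorProduct.rid k V).toLinearMap ∘ₗ counit.lTensor V ∘ₗ ρV.ρ :=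
        congr($hcounit ∘ₗ ρV.ρ)
    _ = u := by rw [ρV.counit_id, comp_id]

lemma rTensor_convUnit_comp_comul {R : Type} [Ring R] [Algebra k R] :
    (convUnit k C R).rTensor C ∘ₗ comul = TensorProduct.mk k R C 1 := by
  rw [convUnit, rTensor_comp, comp_assoc, rTensor_counit_comp_comul]
  ext c
  simp

lemma coactMC_comp_mk (v : V) :
    coactMC k C V ∘ₗ TensorProduct.mk k V C v = (TensorProduct.mk k V C v).rTensor C ∘ₗ comul := by
  have h : (TensorProduct.assoc k V C C).symm.toLinearMap ∘ₗ TensorProduct.mk k V (C ⊗[k] C) v =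
      (TensorProduct.mk k V C v).rTensor C := by
    ext c c'
    simp
  rw [← h]
  rfl

lemma coactMC_comp_rTensor (s : V →ₗ[k] W) :
    coactMC k C W ∘ₗ s.rTensor C = (s.rTensor C).rTensor C ∘ₗ coactMC k C V := by
  ext v c
  simp only [coactMC, AlgebraTensorModule.curry_apply, curry_apply, restrictScalars_apply,
    comp_apply, rTensor_tmul, lTensor_tmul, LinearEquiv.coe_coe]
  induction comul (R := k) c using TensorProduct.induction_on with
  | zero => simp
  | tmul c₁ c₂ => simp
  | add x y hx hy => simp only [tmul_add, map_add, hx, hy]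

lemma coactMC_comp_coaction (ρV : RComod k C V) :
    coactMC k C V ∘ₗ ρV.ρ = ρV.ρ.rTensor C ∘ₗ ρV.ρ := by
  rw [coactMC, comp_assoc, ρV.coassoc, ← comp_assoc, LinearEquiv.symm_comp, id_comp]

lemma rid_counit_comp_rTensor_comp_coaction (ρV : RComod k C V) (s : V →ₗ[k] W) :
    (TensorProduct.rid k W).toLinearMap ∘ₗ counit.lTensor W ∘ₗ s.rTensor C ∘ₗ ρV.ρ = s := by
  have h : (TensorProduct.rid k W).toLinearMap ∘ₗ counit.lTensor W ∘ₗ s.rTensor C =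
      s ∘ₗ (TensorProduct.rid k V).toLinearMap ∘ₗ counit.lTensor V := by
    ext v c
    simp
  calc _ = s ∘ₗ (TensorProduct.rid k V).toLinearMap ∘ₗ counit.lTensor V ∘ₗ ρV.ρ :=
        congr($h ∘ₗ ρV.ρ)
    _ = s := by rw [ρV.counit_id, comp_id]

end CoactionConvolution

section Cleft

variable {k A C : Type} [Field k] [Ring A] [Algebra k A] [AddCommGroup C] [Module k C]
  [Coalgebra k C] {ΔA : RComod k C A} {σ : A ⊗[k] C →ₗ[k] A ⊗[k] A} {B : Set A}
  {Φ Φinv : C →ₗ[k] A}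

lemma conv_eq_coactConv (f g : C →ₗ[k] A) :
    conv f g = coactConv (RComod.regular k C).ρ (mul' k A) f g := rfl

lemma mul'_comp_rTensor_mul' :
    mul' k A ∘ₗ (mul' k A).rTensor A =
      mul' k A ∘ₗ (mul' k A).lTensor A ∘ₗ (TensorProduct.assoc k A A A).toLinearMap := by
  ext a b c
  simp [mul_assoc]

lemma coactConv_smulTensor_coaction_comp (hΦ : ΔA.ρ ∘ₗ Φ = Φ.rTensor C ∘ₗ comul)
    (h21 : conv Φinv Φ = convUnit k C A) :
    coactConv (RComod.regular k C).ρ (smulTensor k A (A ⊗[k] C)) Φinv (ΔA.ρ ∘ₗ Φ) =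
      TensorProduct.mk k A C 1 := by
  have hsmul : LinearMap.id ∘ₗ (mul' k A).rTensor C = smulTensor k A (A ⊗[k] C) ∘ₗ
      LinearMap.id.lTensor A ∘ₗ (TensorProduct.assoc k A A C).toLinearMap := by
    ext a a' c
    simp [smul_tmul']
  rw [hΦ]
  calc coactConv (RComod.regular k C).ρ (smulTensor k A (A ⊗[k] C)) Φinv
        (coactConv (RComod.regular k C).ρ LinearMap.id Φ LinearMap.id)
      = (conv Φinv Φ).rTensor C ∘ₗ comul :=
        (coactConv_assoc (RComod.regular k C) hsmul Φinv Φ LinearMap.id).symm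
    _ = TensorProduct.mk k A C 1 := by rw [h21, rTensor_convUnit_comp_comul]

lemma coactConv_canAct_mk_one (hσ : canHat ΔA.ρ ∘ₗ σ = LinearMap.id)
    (hker : ker (canHat ΔA.ρ) = relSub k B) (hΦ : ΔA.ρ ∘ₗ Φ = Φ.rTensor C ∘ₗ comul)
    (h12 : conv Φ Φinv = convUnit k C A) (h21 : conv Φinv Φ = convUnit k C A) :
    coactConv (RComod.regular k C).ρ (canAct ΔA.ρ σ) (TensorProduct.mk k A C 1) Φinv =
      Φinv.smulRight (ΔA.ρ 1) := by
  -- `1 ⊗ c = Φ⁻¹(c₁) • ρ(Φ(c₂))`, and `ρ(Φ(c₂)) ◁ Φ⁻¹(c₃) = ρ(Φ(c₂)Φ⁻¹(c₃)) = ε(c₂) ρ(1)`.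
  have hΦΦinv : coactConv (RComod.regular k C).ρ (canAct ΔA.ρ σ) (ΔA.ρ ∘ₗ Φ) Φinv =
      ΔA.ρ ∘ₗ conv Φ Φinv := by
    calc coactConv (RComod.regular k C).ρ (canAct ΔA.ρ σ) (ΔA.ρ ∘ₗ Φ) Φinv
        = (canAct ΔA.ρ σ ∘ₗ ΔA.ρ.rTensor A) ∘ₗ map Φ Φinv ∘ₗ comul := by
          rw [coactConv, ← rTensor_comp_map]
          rfl
      _ = ΔA.ρ ∘ₗ conv Φ Φinv := by
          rw [← coaction_comp_mul hσ hker]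
          rfl
  have hunit : smulTensor k A (A ⊗[k] C) ∘ₗ map Φinv (ΔA.ρ ∘ₗ convUnit k C A) =
      (LinearMap.id.smulRight (ΔA.ρ 1)) ∘ₗ mul' k A ∘ₗ map Φinv (convUnit k C A) := by
    ext c c'
    simp [convUnit, Algebra.algebraMap_eq_smul_one]
  calc coactConv (RComod.regular k C).ρ (canAct ΔA.ρ σ) (TensorProduct.mk k A C 1) Φinv
      = coactConv (RComod.regular k C).ρ (smulTensor k A (A ⊗[k] C)) Φinv
          (coactConv (RComod.regular k C).ρ (canAct ΔA.ρ σ) (ΔA.ρ ∘ₗ Φ) Φinv) := by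
        rw [← coactConv_smulTensor_coaction_comp hΦ h21,
          coactConv_assoc _ (canAct_comp_rTensor_smulTensor hσ hker)]
    _ = LinearMap.id.smulRight (ΔA.ρ 1) ∘ₗ conv Φinv (convUnit k C A) := by
        rw [hΦΦinv, h12, coactConv, ← comp_assoc, hunit]
        rfl
    _ = Φinv.smulRight (ΔA.ρ 1) := by
        rw [conv_eq_coactConv, coactConv_convUnit]
        rfl

/-- The retraction `a ↦ a₍₀₎ Φ⁻¹(a₍₁₎)` of a cleft extension onto its coinvariants. -/
noncomputable def cleftRetraction (ΔA : RComod k C A) (Φinv : C →ₗ[k] A) : A →ₗ[k] A :=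
  coactConv ΔA.ρ (mul' k A) LinearMap.id Φinv

lemma coaction_cleftRetraction (hσ : canHat ΔA.ρ ∘ₗ σ = LinearMap.id)
    (hker : ker (canHat ΔA.ρ) = relSub k B) (hΦ : ΔA.ρ ∘ₗ Φ = Φ.rTensor C ∘ₗ comul)
    (h12 : conv Φ Φinv = convUnit k C A) (h21 : conv Φinv Φ = convUnit k C A) (a : A) :
    ΔA.ρ (cleftRetraction ΔA Φinv a) = cleftRetraction ΔA Φinv a • ΔA.ρ 1 := by
  have hρ : coactConv ΔA.ρ (smulTensor k A (A ⊗[k] C)) LinearMap.id (TensorProduct.mk k A C 1) =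
      ΔA.ρ := by
    have : smulTensor k A (A ⊗[k] C) ∘ₗ map LinearMap.id (TensorProduct.mk k A C 1) =
        LinearMap.id := by
      ext a c
      simp [smul_tmul']
    rw [coactConv, ← comp_assoc, this, id_comp]
  have hsmul : smulTensor k A (A ⊗[k] C) ∘ₗ map LinearMap.id (Φinv.smulRight (ΔA.ρ 1)) =
      (LinearMap.id.smulRight (ΔA.ρ 1)) ∘ₗ mul' k A ∘ₗ map LinearMap.id Φinv := by
    ext a c
    simp [mul_smul]
  have key : ΔA.ρ ∘ₗ cleftRetraction ΔA Φinv =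
      LinearMap.id.smulRight (ΔA.ρ 1) ∘ₗ cleftRetraction ΔA Φinv :=
    calc ΔA.ρ ∘ₗ cleftRetraction ΔA Φinv
        = (ΔA.ρ ∘ₗ mul' k A) ∘ₗ map LinearMap.id Φinv ∘ₗ ΔA.ρ := rfl
      _ = canAct ΔA.ρ σ ∘ₗ (ΔA.ρ.rTensor A ∘ₗ map LinearMap.id Φinv) ∘ₗ ΔA.ρ := by
          rw [coaction_comp_mul hσ hker]
          rfl
      _ = coactConv ΔA.ρ (canAct ΔA.ρ σ)
            (coactConv ΔA.ρ (smulTensor k A (A ⊗[k] C)) LinearMap.id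
              (TensorProduct.mk k A C 1)) Φinv := by
          rw [rTensor_comp_map, hρ]
          rfl
      _ = coactConv ΔA.ρ (smulTensor k A (A ⊗[k] C)) LinearMap.id
            (Φinv.smulRight (ΔA.ρ 1)) := by
          rw [coactConv_assoc _ (canAct_comp_rTensor_smulTensor hσ hker),
            coactConv_canAct_mk_one hσ hker hΦ h12 h21]
      _ = LinearMap.id.smulRight (ΔA.ρ 1) ∘ₗ cleftRetraction ΔA Φinv := by
          rw [coactConv, ← comp_assoc, hsmul]
          rfl
  exact congr($key a)

lemma cleftRetraction_mem_coinvB (hσ : canHat ΔA.ρ ∘ₗ σ = LinearMap.id)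
    (hker : ker (canHat ΔA.ρ) = relSub k B) (hΦ : ΔA.ρ ∘ₗ Φ = Φ.rTensor C ∘ₗ comul)
    (h12 : conv Φ Φinv = convUnit k C A) (h21 : conv Φinv Φ = convUnit k C A) (a : A) :
    cleftRetraction ΔA Φinv a ∈ coinvB k ΔA.ρ :=
  mem_coinvB_of_coaction_eq hσ hker (coaction_cleftRetraction hσ hker hΦ h12 h21 a)

lemma cleftRetraction_mul {b : A} (hb : b ∈ coinvB k ΔA.ρ) (a : A) :
    cleftRetraction ΔA Φinv (b * a) = b * cleftRetraction ΔA Φinv a := by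
  simp only [cleftRetraction, coactConv, comp_apply, mem_coinvB_iff.1 hb a]
  rw [← lTensor_def, mul'_lTensor_smul]

lemma coactConv_cleftRetraction (h21 : conv Φinv Φ = convUnit k C A) :
    coactConv ΔA.ρ (mul' k A) (cleftRetraction ΔA Φinv) Φ = LinearMap.id := by
  rw [cleftRetraction, coactConv_assoc _ mul'_comp_rTensor_mul', ← conv_eq_coactConv, h21,
    coactConv_convUnit]

lemma cleftRetraction_comp (hΦ : ΔA.ρ ∘ₗ Φ = Φ.rTensor C ∘ₗ comul)
    (h12 : conv Φ Φinv = convUnit k C A) :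
    cleftRetraction ΔA Φinv ∘ₗ Φ = convUnit k C A := by
  rw [cleftRetraction, coactConv_comp hΦ, id_comp]
  exact h12

end Cleft

section NormalBasis

variable {k A C : Type} [Field k] [Ring A] [Algebra k A] [AddCommGroup C] [Module k C]
  {B : Subalgebra k A} {s : A →ₗ[k] ↥B} {Φ : C →ₗ[k] A}

/-- `ŝ(a) = s(a₍₀₎) ⊗ a₍₁₎`. -/
noncomputable def sHat {W : Type} [AddCommGroup W] [Module k W] (ρ : A →ₗ[k] A ⊗[k] C)
    (s : A →ₗ[k] W) : A →ₗ[k] W ⊗[k] C :=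
  s.rTensor C ∘ₗ ρ

/-- `b ⊗ c ↦ b Φ(c)`, the inverse of `ŝ` for cleft extensions. -/
noncomputable def tensorMul (B : Subalgebra k A) (Φ : C →ₗ[k] A) : ↥B ⊗[k] C →ₗ[k] A :=
  mul' k A ∘ₗ map B.val.toLinearMap Φ

lemma rTensor_smul_of_map_mul (hs : ∀ (b : ↥B) (a : A), s (b * a) = b * s a) (b : ↥B)
    (z : A ⊗[k] C) : s.rTensor C ((b : A) • z) = b • s.rTensor C z := by
  induction z using TensorProduct.induction_on with
  | zero => simp
  | tmul a c => simp [smul_tmul', hs]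
  | add x y hx hy => simp only [smul_add, map_add, hx, hy]

variable [Coalgebra k C] {ΔA : RComod k C A}

lemma sHat_comp_tensorMul (hB : ∀ b ∈ B, b ∈ coinvB k ΔA.ρ)
    (hs : ∀ (b : ↥B) (a : A), s (b * a) = b * s a)
    (hΦ : sHat ΔA.ρ s ∘ₗ Φ = TensorProduct.mk k ↥B C 1) :
    sHat ΔA.ρ s ∘ₗ tensorMul B Φ = LinearMap.id := by
  ext b c
  have hΦc : s.rTensor C (ΔA.ρ (Φ c)) = 1 ⊗ₜ c := congr($hΦ c)
  calc s.rTensor C (ΔA.ρ ((b : A) * Φ c)) = b • s.rTensor C (ΔA.ρ (Φ c)) := by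
        rw [mem_coinvB_iff.1 (hB b b.2), rTensor_smul_of_map_mul hs]
    _ = b ⊗ₜ c := by rw [hΦc, smul_tmul', smul_eq_mul, mul_one]

lemma tensorMul_comp_sHat :
    tensorMul B Φ ∘ₗ sHat ΔA.ρ s = coactConv ΔA.ρ (mul' k A) (B.val.toLinearMap ∘ₗ s) Φ := by
  rw [tensorMul, sHat, comp_assoc, ← comp_assoc _ _ (map _ _), map_comp_rTensor]
  rfl

theorem exists_bijective_sHat_of_cleft (hB : ∀ b : A, b ∈ B ↔ b ∈ coinvB k ΔA.ρ)
    (hsurj : Function.Surjective (canHat ΔA.ρ))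
    (hker : ker (canHat ΔA.ρ) = relSub k (coinvB k ΔA.ρ)) {Φinv : C →ₗ[k] A}
    (hΦ : ΔA.ρ ∘ₗ Φ = Φ.rTensor C ∘ₗ comul) (h12 : conv Φ Φinv = convUnit k C A)
    (h21 : conv Φinv Φ = convUnit k C A) :
    ∃ s : A →ₗ[k] ↥B, (∀ (b : ↥B) (a : A), s (b * a) = b * s a) ∧
      Function.Bijective (sHat ΔA.ρ s) := by
  obtain ⟨σ, hσ⟩ := (canHat ΔA.ρ).exists_rightInverse_of_surjective (range_eq_top.2 hsurj)
  let s : A →ₗ[k] ↥B := LinearMap.codRestrict (Subalgebra.toSubmodule B) (cleftRetraction ΔA Φinv)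
    fun a ↦ (hB _).2 (cleftRetraction_mem_coinvB hσ hker hΦ h12 h21 a)
  have hval : B.val.toLinearMap ∘ₗ s = cleftRetraction ΔA Φinv := rfl
  have hs : ∀ (b : ↥B) (a : A), s (b * a) = b * s a := fun b a ↦
    Subtype.ext (cleftRetraction_mul ((hB b).1 b.2) a)
  have hsΦ : sHat ΔA.ρ s ∘ₗ Φ = TensorProduct.mk k ↥B C 1 := by
    have hsΦ' : s ∘ₗ Φ = convUnit k C ↥B := by
      ext c
      have h := congr($(cleftRetraction_comp hΦ h12) c)
      simp only [convUnit, comp_apply, Algebra.linearMap_apply] at h ⊢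
      exact h
    rw [sHat, comp_assoc, hΦ, ← comp_assoc, ← rTensor_comp, hsΦ', rTensor_convUnit_comp_comul]
  refine ⟨s, hs, Function.bijective_iff_has_inverse.2 ⟨tensorMul B Φ, fun a ↦ ?_, fun z ↦ ?_⟩⟩
  · rw [← comp_apply (tensorMul B Φ), tensorMul_comp_sHat, hval, coactConv_cleftRetraction h21,
      id_apply]
  · exact congr($(sHat_comp_tensorMul (fun b hb ↦ (hB b).1 hb) hs hsΦ) z)

end NormalBasis

section Converse

variable {k A C : Type} [Field k] [Ring A] [Algebra k A] [AddCommGroup C] [Module k C]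
  {ρ : A →ₗ[k] A ⊗[k] C} {B : Subalgebra k A} {s : A →ₗ[k] ↥B}
  {σ : A ⊗[k] C →ₗ[k] A ⊗[k] A}

/-- `can (a ⊗ a') ↦ a s(a')`; it descends along `can` because `s` is left `B`-linear. -/
noncomputable def galoisLift (σ : A ⊗[k] C →ₗ[k] A ⊗[k] A) (s : A →ₗ[k] ↥B) :
    A ⊗[k] C →ₗ[k] A :=
  mul' k A ∘ₗ (B.val.toLinearMap ∘ₗ s).lTensor A ∘ₗ σ

lemma galoisLift_comp_canHat (hσ : canHat ρ ∘ₗ σ = LinearMap.id)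
    (hker : ker (canHat ρ) = relSub k (coinvB k ρ)) (hB : ∀ b ∈ coinvB k ρ, b ∈ B)
    (hs : ∀ (b : ↥B) (a : A), s (b * a) = b * s a) :
    galoisLift σ s ∘ₗ canHat ρ = mul' k A ∘ₗ (B.val.toLinearMap ∘ₗ s).lTensor A := by
  have hrel : ker (canHat ρ) ≤ ker (mul' k A ∘ₗ (B.val.toLinearMap ∘ₗ s).lTensor A) := by
    rw [hker, relSub, Submodule.span_le]
    rintro _ ⟨a, a', b, hb, rfl⟩
    have hsb : (s (b * a') : A) = b * s a' := congr(($(hs ⟨b, hB b hb⟩ a') : A))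
    simp [hsb, mul_assoc]
  exact comp_rightInverse_comp_of_ker_le hσ hrel

lemma galoisLift_smul (hσ : canHat ρ ∘ₗ σ = LinearMap.id)
    (hker : ker (canHat ρ) = relSub k (coinvB k ρ)) (hB : ∀ b ∈ coinvB k ρ, b ∈ B)
    (hs : ∀ (b : ↥B) (a : A), s (b * a) = b * s a) (a : A) (z : A ⊗[k] C) :
    galoisLift σ s (a • z) = a * galoisLift σ s z := by
  have hlift := galoisLift_comp_canHat hσ hker hB hs
  obtain ⟨w, rfl⟩ : ∃ w, canHat ρ w = z := ⟨σ z, congr($hσ z)⟩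
  rw [← canHat_smul, ← comp_apply (galoisLift σ s), ← comp_apply (galoisLift σ s), hlift,
    comp_apply, comp_apply, mul'_lTensor_smul]

lemma galoisLift_comp_coaction (hσ : canHat ρ ∘ₗ σ = LinearMap.id)
    (hker : ker (canHat ρ) = relSub k (coinvB k ρ)) (hB : ∀ b ∈ coinvB k ρ, b ∈ B)
    (hs : ∀ (b : ↥B) (a : A), s (b * a) = b * s a) :
    galoisLift σ s ∘ₗ ρ = B.val.toLinearMap ∘ₗ s := by
  ext a
  have h := congr($(galoisLift_comp_canHat hσ hker hB hs) (1 ⊗ₜ a))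
  rw [comp_apply, canHat_tmul_s18, one_smul] at h
  simpa using h

variable [Coalgebra k C] {ΔA : RComod k C A} {Φ : C →ₗ[k] A}

lemma coactConv_coactMC_smul {F : A ⊗[k] C →ₗ[k] A} (hF : ∀ a z, F (a • z) = a * F z)
    (g : C →ₗ[k] A) (a : A) (z : A ⊗[k] C) :
    coactConv (coactMC k C A) (mul' k A) F g (a • z) =
      a * coactConv (coactMC k C A) (mul' k A) F g z := by
  induction z using TensorProduct.induction_on with
  | zero => simp
  | tmul x c =>
    simp only [coactConv, coactMC, comp_apply, smul_tmul', lTensor_tmul, LinearEquiv.coe_coe]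
    induction comul (R := k) c using TensorProduct.induction_on with
    | zero => simp
    | tmul c₁ c₂ =>
      rw [assoc_symm_tmul, assoc_symm_tmul, map_tmul, map_tmul, ← smul_tmul', hF, mul'_apply,
        mul'_apply, mul_assoc]
    | add y y' hy hy' => simp only [tmul_add, map_add, hy, hy', mul_add]
  | add x y hx hy => simp only [smul_add, map_add, hx, hy, mul_add]

lemma rid_lTensor_counit_smul (a : A) (z : A ⊗[k] C) :
    TensorProduct.rid k A (counit.lTensor A (a • z)) =
      a * TensorProduct.rid k A (counit.lTensor A z) := by
  induction z using TensorProduct.induction_on with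
  | zero => simp
  | tmul x c => simp [smul_tmul']
  | add x y hx hy => simp only [smul_add, map_add, hx, hy, mul_add]

lemma coaction_comp_of_sHat_comp (hinj : Function.Injective (sHat ΔA.ρ s))
    (hsΦ : sHat ΔA.ρ s ∘ₗ Φ = TensorProduct.mk k ↥B C 1) :
    ΔA.ρ ∘ₗ Φ = Φ.rTensor C ∘ₗ comul := by
  have hcolin : coactMC k C ↥B ∘ₗ sHat ΔA.ρ s = (sHat ΔA.ρ s).rTensor C ∘ₗ ΔA.ρ := by
    rw [sHat, ← comp_assoc, coactMC_comp_rTensor, comp_assoc, coactMC_comp_coaction,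
      ← comp_assoc, ← rTensor_comp]
  have hinj' := Module.Flat.rTensor_preserves_injective_linearMap (M := C) _ hinj
  refine LinearMap.ext fun c ↦ hinj' ?_
  calc (sHat ΔA.ρ s).rTensor C (ΔA.ρ (Φ c))
      = coactMC k C ↥B (TensorProduct.mk k ↥B C 1 c) := by
        rw [← hsΦ]
        exact congr($hcolin (Φ c)).symm
    _ = (sHat ΔA.ρ s).rTensor C (Φ.rTensor C (comul c)) := by
        rw [← comp_apply (coactMC k C ↥B), coactMC_comp_mk, ← hsΦ, rTensor_comp]
        rfl

lemma convUnit_eq_of_sHat_comp (hsΦ : sHat ΔA.ρ s ∘ₗ Φ = TensorProduct.mk k ↥B C 1) :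
    B.val.toLinearMap ∘ₗ s ∘ₗ Φ = convUnit k C A := by
  rw [← rid_counit_comp_rTensor_comp_coaction ΔA s]
  ext c
  have hc : s.rTensor C (ΔA.ρ (Φ c)) = 1 ⊗ₜ c := congr($hsΦ c)
  simp [hc, convUnit, Algebra.algebraMap_eq_smul_one]

lemma conv_galoisLift_comp_mk (hσ : canHat ΔA.ρ ∘ₗ σ = LinearMap.id)
    (hker : ker (canHat ΔA.ρ) = relSub k (coinvB k ΔA.ρ)) (hB : ∀ b ∈ coinvB k ΔA.ρ, b ∈ B)
    (hs : ∀ (b : ↥B) (a : A), s (b * a) = b * s a) (hΦ : ΔA.ρ ∘ₗ Φ = Φ.rTensor C ∘ₗ comul)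
    (hsΦ : B.val.toLinearMap ∘ₗ s ∘ₗ Φ = convUnit k C A) :
    conv Φ (galoisLift σ s ∘ₗ TensorProduct.mk k A C 1) = convUnit k C A := by
  have hlin : mul' k A ∘ₗ map Φ (galoisLift σ s ∘ₗ TensorProduct.mk k A C 1) =
      galoisLift σ s ∘ₗ Φ.rTensor C := by
    ext x c
    simp [← galoisLift_smul hσ hker hB hs, smul_tmul']
  calc conv Φ (galoisLift σ s ∘ₗ TensorProduct.mk k A C 1)
      = galoisLift σ s ∘ₗ Φ.rTensor C ∘ₗ comul := congr($hlin ∘ₗ comul)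
    _ = B.val.toLinearMap ∘ₗ s ∘ₗ Φ := by
        rw [← hΦ, ← comp_assoc, galoisLift_comp_coaction hσ hker hB hs, comp_assoc]
    _ = convUnit k C A := hsΦ

lemma conv_mk_galoisLift (hσ : canHat ΔA.ρ ∘ₗ σ = LinearMap.id)
    (hker : ker (canHat ΔA.ρ) = relSub k (coinvB k ΔA.ρ)) (hB : ∀ b ∈ coinvB k ΔA.ρ, b ∈ B)
    (hs : ∀ (b : ↥B) (a : A), s (b * a) = b * s a)
    (hsΦ : coactConv ΔA.ρ (mul' k A) (B.val.toLinearMap ∘ₗ s) Φ = LinearMap.id) :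
    conv (galoisLift σ s ∘ₗ TensorProduct.mk k A C 1) Φ = convUnit k C A := by
  have hcounit : coactConv (coactMC k C A) (mul' k A) (galoisLift σ s) Φ =
      (TensorProduct.rid k A).toLinearMap ∘ₗ counit.lTensor A := by
    refine eq_of_comp_coaction_eq (fun z ↦ ⟨σ z, congr($hσ z)⟩)
      (coactConv_coactMC_smul (galoisLift_smul hσ hker hB hs) Φ) rid_lTensor_counit_smul ?_
    rw [coactConv_comp (coactMC_comp_coaction ΔA), galoisLift_comp_coaction hσ hker hB hs, hsΦ,
      comp_assoc, ΔA.counit_id]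
  calc conv (galoisLift σ s ∘ₗ TensorProduct.mk k A C 1) Φ
      = coactConv (coactMC k C A) (mul' k A) (galoisLift σ s) Φ ∘ₗ TensorProduct.mk k A C 1 :=
        (coactConv_comp (coactMC_comp_mk 1) _ _ _).symm
    _ = convUnit k C A := by
        rw [hcounit]
        ext c
        simp [convUnit, Algebra.algebraMap_eq_smul_one]

theorem cleft_of_bijective_sHat (hB : ∀ b : A, b ∈ B ↔ b ∈ coinvB k ΔA.ρ)
    (hsurj : Function.Surjective (canHat ΔA.ρ))
    (hker : ker (canHat ΔA.ρ) = relSub k (coinvB k ΔA.ρ))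
    (hs : ∀ (b : ↥B) (a : A), s (b * a) = b * s a) (hbij : Function.Bijective (sHat ΔA.ρ s)) :
    ∃ Φ Φinv : C →ₗ[k] A, conv Φ Φinv = convUnit k C A ∧ conv Φinv Φ = convUnit k C A ∧
      ΔA.ρ ∘ₗ Φ = Φ.rTensor C ∘ₗ comul := by
  obtain ⟨σ, hσ⟩ := (canHat ΔA.ρ).exists_rightInverse_of_surjective (range_eq_top.2 hsurj)
  have hB' : ∀ b ∈ coinvB k ΔA.ρ, b ∈ B := fun b hb ↦ (hB b).2 hb
  let e := LinearEquiv.ofBijective (sHat ΔA.ρ s) hbij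
  let Φ := e.symm.toLinearMap ∘ₗ TensorProduct.mk k ↥B C 1
  have hsΦ : sHat ΔA.ρ s ∘ₗ Φ = TensorProduct.mk k ↥B C 1 := by
    ext c
    exact e.apply_symm_apply _
  have hinv : coactConv ΔA.ρ (mul' k A) (B.val.toLinearMap ∘ₗ s) Φ = LinearMap.id := by
    rw [← tensorMul_comp_sHat]
    ext a
    exact hbij.1 congr($(sHat_comp_tensorMul (fun b hb ↦ (hB b).1 hb) hs hsΦ) (sHat ΔA.ρ s a))
  have hΦ := coaction_comp_of_sHat_comp hbij.1 hsΦ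
  exact ⟨Φ, galoisLift σ s ∘ₗ TensorProduct.mk k A C 1,
    conv_galoisLift_comp_mk hσ hker hB' hs hΦ (convUnit_eq_of_sHat_comp hsΦ),
    conv_mk_galoisLift hσ hker hB' hs hinv, hΦ⟩

end Converse

/-- a `C`-Galois extension `A(B)^C` is cleft (admits a convolution
invertible right `C`-comodule map `Φ : C → A`) iff there is a left `B`-module map
`s : A → B` such that `ŝ : A → B ⊗ C`, `a ↦ s(a₍₀₎) ⊗ a₍₁₎`, is bijective. -/
theorem statement18 {k A C : Type} [Field k] [Ring A] [Algebra k A]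
    [AddCommGroup C] [Module k C] [Coalgebra k C]
    (ΔA : RComod k C A) (B : Subalgebra k A)
    (hB : ∀ b : A, b ∈ B ↔ b ∈ coinvB k ΔA.ρ)
    (hsurj : Function.Surjective (canHat ΔA.ρ))
    (hker : LinearMap.ker (canHat ΔA.ρ) = relSub k (coinvB k ΔA.ρ)) :
    (∃ Φ Φinv : C →ₗ[k] A,
      conv Φ Φinv = convUnit k C A ∧ conv Φinv Φ = convUnit k C A ∧
      ΔA.ρ ∘ₗ Φ = Φ.rTensor C ∘ₗ Coalgebra.comul (R := k)) ↔
    (∃ s : A →ₗ[k] ↥B,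
      (∀ (b : ↥B) (a : A), s ((b : A) * a) = b * s a) ∧
      Function.Bijective (s.rTensor C ∘ₗ ΔA.ρ)) := by
  constructor
  · rintro ⟨Φ, Φinv, h12, h21, hΦ⟩
    exact exists_bijective_sHat_of_cleft hB hsurj hker hΦ h12 h21
  · rintro ⟨s, hs, hbij⟩
    exact cleft_of_bijective_sHat hB hsurj hker hs hbij
end
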